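/- Head spine delivers head normal forms: if he(M) = N then N is a head normal form (HNF). -/
import Mathlib


/-- Pure λ-calculus terms (de Bruijn representation). -/
inductive Tm : Type
  | var : Nat → Tm
  | lam : Tm → Tm
  | app : Tm → Tm → Tm
deriving DecidableEq

/-- Shift the free variables (those ≥ `c`) of a term up by one. -/
def lift (c : Nat) : Tm → Tm
  | .var n => if n < c then .var n else .var (n + 1)
  | .lam b => .lam (lift (c + 1) b)
  | .app m n => .app (lift c m) (lift c n)

/-- Capture-avoiding substitution `[N/k]B` (de Bruijn). -/
def subst (N : Tm) (k : Nat) : Tm → Tm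
  | .var n => if n < k then .var n else if n = k then N else .var (n - 1)
  | .lam b => .lam (subst (lift 0 N) (k + 1) b)
  | .app m n => .app (subst N k m) (subst N k n)
/-- Head spine big-step relation. -/
inductive He : Tm → Tm → Prop
  | var : ∀ n, He (.var n) (.var n)
  | lam : ∀ B B', He B B' → He (.lam B) (.lam B')
  | beta : ∀ M N B B', He M (.lam B) → He (subst N 0 B) B' → He (.app M N) B'
  | neu : ∀ M N M', He M M' → (∀ B, M' ≠ .lam B) → He (.app M N) (.app M' N)

/-- Neutral terms with arbitrary operands: x N1 … Nn. -/
inductive Neu : Tm → Prop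
  | var : ∀ n, Neu (.var n)
  | app : ∀ M N, Neu M → Neu (.app M N)

/-- Head normal forms: HNF ::= λx.HNF | x N1 … Nn. -/
inductive Hnf : Tm → Prop
  | lam : ∀ B, Hnf B → Hnf (.lam B)
  | neu : ∀ M, Neu M → Hnf M

/-- Head spine delivers head normal forms. -/
theorem he_delivers_hnf : ∀ M N : Tm, He M N → Hnf N := by
  intro M N h
  induction h with
  | var n => exact Hnf.neu _ (Neu.var n)
  | lam B B' _ ih => exact Hnf.lam _ ih
  | beta M N B B' _ _ _ ih2 => exact ih2
  | neu M N M' _ hnl ih =>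
    apply Hnf.neu
    cases ih with
    | lam B hB => exact absurd rfl (hnl B)
    | neu _ hn => exact Neu.app _ _ hn
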